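/- Let $\nu$ be the measure on $(0,\infty)$ with density $\frac{\pi}{4}x^{-1/2}e^{-\sqrt{x}}$, viewed as a L\'evy measure on $\mathbb{R}$ concentrated on $(0,\infty)$. Then its arcsine transform satisfies $\mathcal{A}_1(\nu)(dr) = K_0(r)1_{(0,\infty)}(r)\,dr$, where $K_0(r) = \int_1^{\infty}(t^2-1)^{-1/2}e^{-rt}\,dt$. Equivalently, for $r>0$: $\int_{r^2}^{\infty}\frac{2}{\pi}(s-r^2)^{-1/2}\cdot\frac{\pi}{4}s^{-1/2}e^{-\sqrt{s}}\,ds = K_0(r)$. -/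

import Mathlib

open MeasureTheory Real Set ENNReal

/-- The modified Bessel function `K₀`, via the representation
`K₀(x) = ∫₁^∞ (t²-1)^{-1/2} e^{-xt} dt`. -/
noncomputable def K0 (x : ℝ) : ℝ :=
  ∫ t in Set.Ioi (1 : ℝ), (t ^ 2 - 1) ^ (-(1/2) : ℝ) * Real.exp (-(x * t))

/-!
Substituting `s = (r t)²` turns `(s - r²)^{-1/2} s^{-1/2} ds` into `2 (t² - 1)^{-1/2} dt / r`
and `e^{-√s}` into `e^{-r t}`, so the constants `2/π`, `π/4` and the Jacobian `2 r² t` cancel and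
the arcsine integral becomes the integral representation of `K₀(r)`.
-/

lemma image_mul_sq_Ioi_one {a : ℝ} (ha : 0 < a) :
    (fun t : ℝ => (a * t) ^ 2) '' Ioi 1 = Ioi (a ^ 2) := by
  ext s
  simp only [mem_image, mem_Ioi]
  constructor
  · rintro ⟨t, ht, rfl⟩
    have hat : a < a * t := lt_mul_of_one_lt_right ha ht
    gcongr
  · intro hs
    have hs0 : 0 < s := (pow_pos ha 2).trans hs
    refine ⟨√s / a, ?_, ?_⟩
    · rw [one_lt_div ha, ← sqrt_sq ha.le]
      exact sqrt_lt_sqrt (sq_nonneg a) hs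
    · rw [mul_div_cancel₀ _ ha.ne', sq_sqrt hs0.le]

lemma injOn_mul_sq_Ioi_one {a : ℝ} (ha : 0 < a) :
    InjOn (fun t : ℝ => (a * t) ^ 2) (Ioi 1) := by
  intro t ht u hu h
  have hpos : ∀ v ∈ Ioi (1 : ℝ), 0 ≤ a * v := fun v hv =>
    mul_nonneg ha.le (zero_le_one.trans (le_of_lt hv))
  exact mul_left_cancel₀ ha.ne' ((sq_eq_sq₀ (hpos t ht) (hpos u hu)).1 h)

theorem integral_Ioi_sq_eq_integral_Ioi_one {E : Type*} [NormedAddCommGroup E]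
    [NormedSpace ℝ E] {a : ℝ} (ha : 0 < a) (f : ℝ → E) :
    ∫ s in Ioi (a ^ 2), f s = ∫ t in Ioi 1, (2 * a ^ 2 * t) • f ((a * t) ^ 2) := by
  have hderiv : ∀ t ∈ Ioi (1 : ℝ),
      HasDerivWithinAt (fun t : ℝ => (a * t) ^ 2) (2 * a ^ 2 * t) (Ioi 1) t := fun t _ =>
    ((((hasDerivAt_id' t).const_mul a).fun_pow 2).congr_deriv (by push_cast; ring)).hasDerivWithinAt
  rw [← image_mul_sq_Ioi_one ha,
    integral_image_eq_integral_abs_deriv_smul measurableSet_Ioi hderiv (injOn_mul_sq_Ioi_one ha)]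
  refine setIntegral_congr_fun measurableSet_Ioi fun t ht => ?_
  have ht0 : (0 : ℝ) < t := zero_lt_one.trans ht
  rw [abs_of_pos (by positivity)]

lemma rpow_neg_half_eq_inv_sqrt {x : ℝ} (hx : 0 ≤ x) : x ^ (-(1/2) : ℝ) = (√x)⁻¹ := by
  rw [rpow_neg hx, sqrt_eq_rpow]

lemma arcsine_integrand_mul_sq {a t : ℝ} (ha : 0 < a) (ht : 1 < t) :
    (2 * a ^ 2 * t) * (2 / π * ((a * t) ^ 2 - a ^ 2) ^ (-(1/2) : ℝ) *
        (π / 4 * ((a * t) ^ 2) ^ (-(1/2) : ℝ) * exp (-√((a * t) ^ 2)))) =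
      (t ^ 2 - 1) ^ (-(1/2) : ℝ) * exp (-(a * t)) := by
  have ht0 : 0 < t := zero_lt_one.trans ht
  have ht1 : 0 < t ^ 2 - 1 := by nlinarith
  have hdiff : (a * t) ^ 2 - a ^ 2 = a ^ 2 * (t ^ 2 - 1) := by ring
  have hsqrt : √(a ^ 2 * (t ^ 2 - 1)) = a * √(t ^ 2 - 1) := by
    rw [sqrt_mul (sq_nonneg a), sqrt_sq ha.le]
  rw [hdiff, rpow_neg_half_eq_inv_sqrt (by positivity), rpow_neg_half_eq_inv_sqrt (by positivity),
    rpow_neg_half_eq_inv_sqrt ht1.le, hsqrt, sqrt_sq (by positivity)]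
  have hsqrt_pos : 0 < √(t ^ 2 - 1) := sqrt_pos.2 ht1
  field_simp
  ring

/-- The arcsine transform of the Lévy measure `(π/4) s^{-1/2} e^{-√s} ds` has density `K₀`. -/
theorem arcsineT_density_eq_K0 (r : ℝ) (hr : 0 < r) :
    ∫ s in Set.Ioi (r ^ 2),
        2 / Real.pi * (s - r ^ 2) ^ (-(1/2) : ℝ) *
          (Real.pi / 4 * s ^ (-(1/2) : ℝ) * Real.exp (-Real.sqrt s)) = K0 r := by
  rw [integral_Ioi_sq_eq_integral_Ioi_one hr, K0]
  exact setIntegral_congr_fun measurableSet_Ioi fun t ht => arcsine_integrand_mul_sq hr ht
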